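/- Let p ≥ 0 be an integer with ν | p−1 and set γ := (p−1)/ν ≥ 0. Then: (i) Coeff_{q^γ} Res_{w=0}( (1+w)^n / (w^{n−r−1} ∏_{k=1}^r(d_k w+1)) · (tilde𝔉 − tilde𝔉_p)/tilde𝔉 ) = Coeff_{q^γ} Res_{w=0}( (1+w)^n / (w^{n−r−1} ∏_{k=1}^r(d_k w+1)) · (𝔉 − 𝔉_p)/𝔉 ); and (ii) Coeff_{q^γ} Res_{w=0}( w^{r+1} / ∏_{k=1}^r(d_k w+1) · tilde𝔉_p/tilde𝔉 ) = 0. Here tilde𝔉 and 𝔉 are invertible as q-power series with ℚ((w))-coefficients since their q-constant terms equal 1, and the prefactors are expanded as Laurent series at w = 0 (∏_{k}(d_k w+1) has constant term 1). -/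

import Mathlib

/-- The Laurent-series variable `w`. -/
noncomputable def Zl : LaurentSeries ℚ := HahnSeries.single (1 : ℤ) (1 : ℚ)

/-- `Res_{w=0}`: in each q-coefficient take the coefficient of `w⁻¹`. -/
noncomputable def resH (f : PowerSeries (LaurentSeries ℚ)) : PowerSeries ℚ :=
  PowerSeries.mk fun β => (PowerSeries.coeff (R := LaurentSeries ℚ) β f).coeff (-1)

/-- The coefficients `c_{p,l}^{(β)}`. -/
noncomputable def ccoef (n r : ℕ) (d : Fin r → ℕ) (p β : ℕ) (l : ℤ) : ℚ :=
  if l < 0 then 0 else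
    PowerSeries.coeff (R := ℚ) l.toNat
      (((PowerSeries.X + (β : PowerSeries ℚ)) ^ p *
          ∏ k : Fin r, ∏ i ∈ Finset.range (d k * β),
            ((d k : PowerSeries ℚ) * PowerSeries.X + ((i + 1 : ℕ) : PowerSeries ℚ))) *
        (∏ j ∈ Finset.range β, (PowerSeries.X + ((j + 1 : ℕ) : PowerSeries ℚ)) ^ n)⁻¹)

/-- The operator `𝐃 = 1 + (q/w)·d/dq` on q-series with Laurent-series coefficients. -/
noncomputable def Dop (H : PowerSeries (LaurentSeries ℚ)) : PowerSeries (LaurentSeries ℚ) :=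
  PowerSeries.mk fun β =>
    (1 + HahnSeries.single (-1 : ℤ) ((β : ℕ) : ℚ)) * PowerSeries.coeff (R := LaurentSeries ℚ) β H

/-! Give `q` the weight `ν`: say that a `q`-series has `w`-order at least `e` when its
`q^β`-coefficient has `w`-order at least `νβ + e`. This is stable under sums and products (orders
add), under inversion of series with constant term `1` (at `e = 0`), and each application of `𝐃`
costs one order. `𝔉` and `tilde𝔉` have order `0`; they differ only through the factors
`(w+j)^n` versus `(w+j)^n - w^n`, which agree modulo `w^n`, so `tilde𝔉 - 𝔉` has order `n`, and
passing from a series to its `p`-th transform costs `p`. Hence the `q^γ`-coefficients of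
`(tilde𝔉 - tilde𝔉_p)/tilde𝔉 - (𝔉 - 𝔉_p)/𝔉` and of `tilde𝔉_p/tilde𝔉` have `w`-order at least
`νγ + n - p = n - 1` and `νγ - p = -1`, while the prefactors have order at least `-(n-r-1)` and
`r+1`: both products are regular at `w = 0`, so their residues vanish. -/

open WithZero

section Valuation

variable {R : Type*} [CommRing R] {v : Valuation R ℤᵐ⁰}

theorem Valuation.map_mul_le_exp_neg {x y : R} {a b : ℤ} (hx : v x ≤ exp (-a))
    (hy : v y ≤ exp (-b)) : v (x * y) ≤ exp (-(a + b)) := by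
  rw [map_mul, neg_add, exp_add]
  exact mul_le_mul' hx hy

theorem Valuation.map_prod_sub_prod_le {ι : Type*} (s : Finset ι) {A B : ι → R} {g : ℤᵐ⁰}
    (hA : ∀ i ∈ s, v (A i) ≤ 1) (hB : ∀ i ∈ s, v (B i) ≤ 1) (hAB : ∀ i ∈ s, v (A i - B i) ≤ g) :
    v (∏ i ∈ s, A i - ∏ i ∈ s, B i) ≤ g := by
  classical
  induction s using Finset.induction with
  | empty => simp
  | insert x s hx ih =>
    simp only [Finset.mem_insert, forall_eq_or_imp] at hA hB hAB
    rw [Finset.prod_insert hx, Finset.prod_insert hx,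
      show A x * ∏ i ∈ s, A i - B x * ∏ i ∈ s, B i
        = A x * (∏ i ∈ s, A i - ∏ i ∈ s, B i) + (A x - B x) * ∏ i ∈ s, B i by ring]
    have hprod : v (∏ i ∈ s, B i) ≤ 1 := by
      rw [map_prod]; exact Finset.prod_le_one' hB.2
    refine v.map_add_le ?_ ?_ <;> rw [map_mul]
    · exact mul_le_of_le_one_of_le hA.1 (ih hA.2 hB.2 hAB.2)
    · exact mul_le_of_le_of_le_one hAB.1 hprod

end Valuation

section LaurentSeries

variable {K : Type*} [Field K]

theorem LaurentSeries.valuation_single_le (s : ℤ) (a : K) :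
    Valued.v (HahnSeries.single s a : LaurentSeries K) ≤ exp (-s) :=
  (LaurentSeries.valuation_le_iff_coeff_lt_eq_zero K).mpr fun _ hn =>
    HahnSeries.coeff_single_of_ne hn.ne

theorem LaurentSeries.valuation_single_zero {a : K} (ha : a ≠ 0) :
    Valued.v (HahnSeries.single 0 a : LaurentSeries K) = 1 := by
  have hle (b : K) : Valued.v (HahnSeries.single 0 b : LaurentSeries K) ≤ 1 := by
    simpa using valuation_single_le 0 b
  refine le_antisymm (hle a) ?_
  calc (1 : ℤᵐ⁰)
      = Valued.v (HahnSeries.single 0 a * HahnSeries.single 0 a⁻¹ : LaurentSeries K) := by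
        rw [HahnSeries.single_mul_single, add_zero, mul_inv_cancel₀ ha, HahnSeries.single_zero_one,
          map_one]
    _ ≤ Valued.v (HahnSeries.single 0 a : LaurentSeries K) := by
        rw [map_mul]; exact mul_le_of_le_one_right' (hle _)

end LaurentSeries

theorem valuation_Zl_pow (k : ℕ) : Valued.v (Zl ^ k) = exp (-(k : ℤ)) := by
  rw [map_pow, Zl, LaurentSeries.valuation_single_zpow, ← exp_nsmul]
  simp

theorem valuation_Zl_lt_one : Valued.v Zl < 1 := by
  rw [← pow_one Zl, valuation_Zl_pow, ← exp_zero, exp_lt_exp]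
  omega

theorem valuation_natCast_le_one (c : ℕ) : Valued.v (c : LaurentSeries ℚ) ≤ 1 := by
  simpa [HahnSeries.single_zero_natCast] using LaurentSeries.valuation_single_le 0 (c : ℚ)

theorem valuation_natCast {c : ℕ} (hc : c ≠ 0) : Valued.v (c : LaurentSeries ℚ) = 1 :=
  LaurentSeries.valuation_single_zero (Nat.cast_ne_zero.mpr hc)

theorem valuation_Zl_add_natCast_pow {c : ℕ} (hc : c ≠ 0) (n : ℕ) :
    Valued.v ((Zl + c) ^ n) = 1 := by
  have hlt : Valued.v Zl < Valued.v (c : LaurentSeries ℚ) := by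
    rw [valuation_natCast hc]; exact valuation_Zl_lt_one
  rw [map_pow, Valued.v.map_add_eq_of_lt_right hlt, valuation_natCast hc, one_pow]

theorem valuation_Zl_add_natCast_pow_sub_Zl_pow {c n : ℕ} (hc : c ≠ 0) (hn : n ≠ 0) :
    Valued.v ((Zl + c) ^ n - Zl ^ n) = 1 := by
  rw [Valuation.map_sub_eq_of_lt_left] <;> rw [valuation_Zl_add_natCast_pow hc]
  rw [valuation_Zl_pow, ← exp_zero, exp_lt_exp]
  omega

theorem valuation_natCast_mul_Zl_add_natCast (c : ℕ) {i : ℕ} (hi : i ≠ 0) :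
    Valued.v ((c : LaurentSeries ℚ) * Zl + i) = 1 := by
  rw [Valuation.map_add_eq_of_lt_right, valuation_natCast hi]
  rw [valuation_natCast hi, map_mul]
  exact (mul_le_of_le_one_left' (valuation_natCast_le_one c)).trans_lt valuation_Zl_lt_one

section Series

theorem valuation_Zl_pow_mul_prod_le (ν r : ℕ) (d : Fin r → ℕ) (β : ℕ) :
    Valued.v (Zl ^ (ν * β) * ∏ k : Fin r, ∏ i ∈ Finset.range (d k * β),
      ((d k : LaurentSeries ℚ) * Zl + ((i + 1 : ℕ) : LaurentSeries ℚ))) ≤ exp (-(ν * β : ℤ)) := by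
  rw [map_mul, valuation_Zl_pow, map_prod, Nat.cast_mul]
  refine mul_le_of_le_one_right' (Finset.prod_le_one' fun k _ => ?_)
  rw [map_prod]
  exact Finset.prod_le_one' fun i _ => (valuation_natCast_mul_Zl_add_natCast _ i.succ_ne_zero).le

theorem valuation_prod_Zl_add_natCast_pow (n β : ℕ) :
    Valued.v (∏ j ∈ Finset.range β, (Zl + ((j + 1 : ℕ) : LaurentSeries ℚ)) ^ n) = 1 := by
  rw [map_prod]
  exact Finset.prod_eq_one fun j _ => valuation_Zl_add_natCast_pow j.succ_ne_zero n

theorem valuation_prod_Zl_add_natCast_pow_sub_Zl_pow {n : ℕ} (hn : n ≠ 0) (β : ℕ) :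
    Valued.v (∏ j ∈ Finset.range β, ((Zl + ((j + 1 : ℕ) : LaurentSeries ℚ)) ^ n - Zl ^ n)) = 1 := by
  rw [map_prod]
  exact Finset.prod_eq_one fun j _ => valuation_Zl_add_natCast_pow_sub_Zl_pow j.succ_ne_zero hn

theorem valuation_prod_sub_prod_Zl_pow_le {n : ℕ} (hn : n ≠ 0) (β : ℕ) :
    Valued.v (∏ j ∈ Finset.range β, (Zl + ((j + 1 : ℕ) : LaurentSeries ℚ)) ^ n
      - ∏ j ∈ Finset.range β, ((Zl + ((j + 1 : ℕ) : LaurentSeries ℚ)) ^ n - Zl ^ n))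
      ≤ exp (-(n : ℤ)) :=
  Valued.v.map_prod_sub_prod_le _ (fun j _ => (valuation_Zl_add_natCast_pow j.succ_ne_zero n).le)
    (fun j _ => (valuation_Zl_add_natCast_pow_sub_Zl_pow j.succ_ne_zero hn).le)
    (fun j _ => by rw [sub_sub_cancel, valuation_Zl_pow])

theorem valuation_prod_natCast_mul_Zl_add_one {r : ℕ} (d : Fin r → ℕ) :
    Valued.v (∏ k : Fin r, ((d k : LaurentSeries ℚ) * Zl + 1)) = 1 := by
  rw [map_prod]
  exact Finset.prod_eq_one fun k _ => by
    simpa using valuation_natCast_mul_Zl_add_natCast (d k) one_ne_zero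

theorem valuation_one_add_Zl_pow_div_le (n s : ℕ) {r : ℕ} (d : Fin r → ℕ) :
    Valued.v ((1 + Zl) ^ n / (Zl ^ s * ∏ k : Fin r, ((d k : LaurentSeries ℚ) * Zl + 1)))
      ≤ exp (s : ℤ) := by
  rw [map_div₀, map_mul, valuation_prod_natCast_mul_Zl_add_one, mul_one, valuation_Zl_pow,
    exp_neg, div_inv_eq_mul]
  refine mul_le_of_le_one_left' ?_
  rw [map_pow]
  exact pow_le_one' (Valued.v.map_add_le (by rw [map_one]) valuation_Zl_lt_one.le) n

theorem valuation_Zl_pow_div_prod {r : ℕ} (d : Fin r → ℕ) :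
    Valued.v (Zl ^ (r + 1) / ∏ k : Fin r, ((d k : LaurentSeries ℚ) * Zl + 1))
      = exp (-(r + 1 : ℤ)) := by
  rw [map_div₀, valuation_prod_natCast_mul_Zl_add_one, div_one, valuation_Zl_pow]
  push_cast; rfl

end Series

section WeightedOrder

variable {K : Type*} [Field K]

open PowerSeries

def WeightedOrderGE (ν : ℕ) (e : ℤ) (H : PowerSeries (LaurentSeries K)) : Prop :=
  ∀ b : ℕ, Valued.v (coeff b H) ≤ exp (-(ν * b + e))

namespace WeightedOrderGE

variable {ν : ℕ} {e e' : ℤ} {H H' : PowerSeries (LaurentSeries K)}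

theorem mono (h : WeightedOrderGE ν e H) (he : e' ≤ e) : WeightedOrderGE ν e' H :=
  fun b => (h b).trans (exp_le_exp.mpr (by omega))

theorem neg (h : WeightedOrderGE ν e H) : WeightedOrderGE ν e (-H) := fun b => by
  rw [map_neg, Valuation.map_neg]; exact h b

theorem add (h : WeightedOrderGE ν e H) (h' : WeightedOrderGE ν e H') :
    WeightedOrderGE ν e (H + H') := fun b => by
  rw [map_add]; exact Valued.v.map_add_le (h b) (h' b)

theorem sum {ι : Type*} (s : Finset ι) {F : ι → PowerSeries (LaurentSeries K)}
    (h : ∀ i ∈ s, WeightedOrderGE ν e (F i)) : WeightedOrderGE ν e (∑ i ∈ s, F i) := fun b => by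
  rw [map_sum]; exact Valued.v.map_sum_le fun i hi => h i hi b

theorem mul (h : WeightedOrderGE ν e H) (h' : WeightedOrderGE ν e' H') :
    WeightedOrderGE ν (e + e') (H * H') := fun b => by
  rw [coeff_mul]
  refine Valued.v.map_sum_le fun x hx => ?_
  have hb : (x.1 : ℤ) + x.2 = b := by exact_mod_cast Finset.HasAntidiagonal.mem_antidiagonal.mp hx
  convert Valued.v.map_mul_le_exp_neg (h x.1) (h' x.2) using 3
  rw [← hb]; ring

theorem inv (hH : constantCoeff H = 1) (h : WeightedOrderGE ν 0 H) :
    WeightedOrderGE ν 0 H⁻¹ := by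
  intro b
  induction b using Nat.strong_induction_on with
  | _ b ih =>
    rw [coeff_inv, hH, inv_one]
    split_ifs with hb
    · simp [hb]
    · rw [Valuation.map_mul, Valuation.map_neg, map_one, one_mul]
      refine Valued.v.map_sum_le fun x hx => ?_
      split_ifs with hx2
      · have hb : (x.1 : ℤ) + x.2 = b := by
          exact_mod_cast Finset.HasAntidiagonal.mem_antidiagonal.mp hx
        convert Valued.v.map_mul_le_exp_neg (h x.1) (ih x.2 hx2) using 3
        rw [← hb]; ring
      · simp

theorem C_single_mul_X_pow (s : ℤ) (a : K) (β : ℕ) :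
    WeightedOrderGE ν (s - ν * β) (C (HahnSeries.single s a) * X ^ β) := fun b => by
  rw [coeff_C_mul_X_pow]
  split_ifs with hb
  · subst hb
    convert LaurentSeries.valuation_single_le s a using 3
    ring
  · simp

end WeightedOrderGE

end WeightedOrder

section Dop

open PowerSeries

theorem coeff_Dop_iterate (H : PowerSeries (LaurentSeries ℚ)) (l b : ℕ) :
    coeff b (Dop^[l] H) = (1 + HahnSeries.single (-1) (b : ℚ)) ^ l * coeff b H := by
  induction l with
  | zero => simp
  | succ l ih => rw [Function.iterate_succ_apply', Dop, coeff_mk, ih]; ring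

theorem Dop_iterate_sub (H H' : PowerSeries (LaurentSeries ℚ)) (l : ℕ) :
    Dop^[l] (H - H') = Dop^[l] H - Dop^[l] H' := by
  ext b
  simp only [map_sub, coeff_Dop_iterate, mul_sub]

theorem WeightedOrderGE.Dop_iterate {ν : ℕ} {e : ℤ} {H : PowerSeries (LaurentSeries ℚ)}
    (h : WeightedOrderGE ν e H) (l : ℕ) : WeightedOrderGE ν (e - l) (Dop^[l] H) := fun b => by
  have hD : Valued.v (1 + HahnSeries.single (-1) (b : ℚ) : LaurentSeries ℚ) ≤ exp 1 :=
    Valued.v.map_add_le (by simp [← exp_zero]) (LaurentSeries.valuation_single_le _ _)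
  have hDl : Valued.v ((1 + HahnSeries.single (-1) (b : ℚ)) ^ l : LaurentSeries ℚ)
      ≤ exp (-(-l : ℤ)) := by
    rw [map_pow, neg_neg, ← nsmul_one (A := ℤ) l, exp_nsmul]
    exact pow_le_pow_left' hD l
  rw [coeff_Dop_iterate]
  convert Valued.v.map_mul_le_exp_neg hDl (h b) using 3
  ring

/-- The series `𝔉_p` is `dopTransform ν p (fun β l => c̃_{p,l}^{(β)}) 𝔉`. -/
noncomputable def dopTransform (ν p : ℕ) (c : ℕ → ℕ → ℚ) (H : PowerSeries (LaurentSeries ℚ)) :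
    PowerSeries (LaurentSeries ℚ) :=
  ∑ β ∈ Finset.range (p / ν + 1), ∑ l ∈ Finset.range (p - ν * β + 1),
    C (HahnSeries.single (-((p : ℤ) - ν * β - l)) (c β l)) * X ^ β * Dop^[l] H

theorem dopTransform_sub (ν p : ℕ) (c : ℕ → ℕ → ℚ) (H H' : PowerSeries (LaurentSeries ℚ)) :
    dopTransform ν p c (H - H') = dopTransform ν p c H - dopTransform ν p c H' := by
  simp only [dopTransform, Dop_iterate_sub, mul_sub, Finset.sum_sub_distrib]

theorem WeightedOrderGE.dopTransform {ν p : ℕ} {e : ℤ} {H : PowerSeries (LaurentSeries ℚ)}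
    (c : ℕ → ℕ → ℚ) (h : WeightedOrderGE ν e H) :
    WeightedOrderGE ν (e - p) (dopTransform ν p c H) :=
  sum _ fun β _ => sum _ fun l _ =>
    ((C_single_mul_X_pow _ _ β).mul (h.Dop_iterate l)).mono (le_of_eq (by ring))

end Dop

section Assembly

open PowerSeries

variable {K : Type*} [Field K] {ν : ℕ} {e : ℤ}

theorem WeightedOrderGE.of_coeff_eq_div {H : PowerSeries (LaurentSeries K)}
    {N Den : ℕ → LaurentSeries K} (hH : ∀ b, coeff b H = N b / Den b)
    (hN : ∀ b, Valued.v (N b) ≤ exp (-(ν * b : ℤ))) (hDen : ∀ b, Valued.v (Den b) = 1) :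
    WeightedOrderGE ν 0 H := fun b => by
  rw [hH, map_div₀, hDen, div_one, add_zero]
  exact hN b

theorem WeightedOrderGE.sub_of_coeff_eq_div {H H' : PowerSeries (LaurentSeries K)}
    {N Den Den' : ℕ → LaurentSeries K} (hH : ∀ b, coeff b H = N b / Den b)
    (hH' : ∀ b, coeff b H' = N b / Den' b) (hN : ∀ b, Valued.v (N b) ≤ exp (-(ν * b : ℤ)))
    (hDen : ∀ b, Valued.v (Den b) = 1) (hDen' : ∀ b, Valued.v (Den' b) = 1)
    (hsub : ∀ b, Valued.v (Den' b - Den b) ≤ exp (-e)) :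
    WeightedOrderGE ν e (H - H') := fun b => by
  have hD0 : Den b ≠ 0 := fun h => by simpa [h] using hDen b
  have hD0' : Den' b ≠ 0 := fun h => by simpa [h] using hDen' b
  rw [map_sub, hH, hH', div_sub_div _ _ hD0 hD0', mul_comm (Den b), ← mul_sub, map_div₀,
    map_mul Valued.v (Den b), hDen, hDen', mul_one, div_one]
  exact Valued.v.map_mul_le_exp_neg (hN b) (hsub b)

variable {T F : PowerSeries (LaurentSeries ℚ)}

theorem weightedOrderGE_dopTransform_mul_inv {p : ℕ} (c : ℕ → ℕ → ℚ)
    (hT1 : constantCoeff T = 1) (hT : WeightedOrderGE ν 0 T) :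
    WeightedOrderGE ν (-p) (dopTransform ν p c T * T⁻¹) :=
  ((hT.dopTransform c).mul (hT.inv hT1)).mono (by omega)

theorem weightedOrderGE_sub_dopTransform_mul_inv_sub {p : ℕ} (c : ℕ → ℕ → ℚ)
    (hT1 : constantCoeff T = 1) (hF1 : constantCoeff F = 1) (hT : WeightedOrderGE ν 0 T)
    (hF : WeightedOrderGE ν 0 F) (hTF : WeightedOrderGE ν e (T - F)) :
    WeightedOrderGE ν (e - p)
      ((T - dopTransform ν p c T) * T⁻¹ - (F - dopTransform ν p c F) * F⁻¹) := by
  have hTT : T * T⁻¹ = 1 := PowerSeries.mul_inv_cancel T (by simp [hT1])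
  have hFF : F * F⁻¹ = 1 := PowerSeries.mul_inv_cancel F (by simp [hF1])
  have hinv : WeightedOrderGE ν e (F⁻¹ - T⁻¹) := by
    rw [show F⁻¹ - T⁻¹ = T⁻¹ * ((T - F) * F⁻¹) by linear_combination -F⁻¹ * hTT + T⁻¹ * hFF]
    exact ((hT.inv hT1).mul (hTF.mul (hF.inv hF1))).mono (by omega)
  have hsplit : (T - dopTransform ν p c T) * T⁻¹ - (F - dopTransform ν p c F) * F⁻¹
      = dopTransform ν p c (-(T - F)) * F⁻¹ + dopTransform ν p c T * (F⁻¹ - T⁻¹) := by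
    rw [neg_sub, dopTransform_sub]
    linear_combination hTT - hFF
  rw [hsplit]
  exact (((hTF.neg.dopTransform c).mul (hF.inv hF1)).mono (by omega)).add
    (((hT.dopTransform c).mul hinv).mono (by omega))

theorem coeff_resH_C_mul_eq_zero {γ : ℕ} {s : ℤ} {g : LaurentSeries ℚ}
    {H : PowerSeries (LaurentSeries ℚ)} (hg : Valued.v g ≤ exp s) (hH : WeightedOrderGE ν e H)
    (hs : s ≤ ν * γ + e) : coeff γ (resH (C g * H)) = 0 := by
  rw [resH, coeff_mk, coeff_C_mul]
  refine LaurentSeries.coeff_zero_of_lt_valuation ℚ (D := 0) ?_ (by norm_num)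
  exact (Valued.v.map_mul_le_exp_neg (a := -s) (by rwa [neg_neg]) (hH γ)).trans
    (exp_le_exp.mpr (by omega))

theorem coeff_resH_C_mul_eq_of_sub {γ : ℕ} {s : ℤ} {g : LaurentSeries ℚ}
    {H H' : PowerSeries (LaurentSeries ℚ)} (hg : Valued.v g ≤ exp s)
    (hH : WeightedOrderGE ν e (H - H')) (hs : s ≤ ν * γ + e) :
    coeff γ (resH (C g * H)) = coeff γ (resH (C g * H')) := by
  simpa only [resH, coeff_mk, coeff_C_mul, map_sub, mul_sub, HahnSeries.coeff_sub, sub_eq_zero]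
    using coeff_resH_C_mul_eq_zero hg hH hs

end Assembly

theorem stmt9_general (n r : ℕ) (d : Fin r → ℕ) (m : ℕ)
    (ν : ℕ) (hmn : m < n)
    -- the coefficients c̃_{p,l}^{(β)}
    (ct : ℕ → ℤ → ℕ → ℚ)
    -- the series tilde𝔉(w,q) and 𝔉(w,q)
    (tF F : PowerSeries (LaurentSeries ℚ))
    (htF : ∀ β : ℕ, PowerSeries.coeff (R := LaurentSeries ℚ) β tF =
      Zl ^ (ν * β) *
        (∏ k : Fin r, ∏ i ∈ Finset.range (d k * β),
          ((d k : LaurentSeries ℚ) * Zl + ((i + 1 : ℕ) : LaurentSeries ℚ))) /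
        ∏ j ∈ Finset.range β, ((Zl + ((j + 1 : ℕ) : LaurentSeries ℚ)) ^ n - Zl ^ n))
    (hF : ∀ β : ℕ, PowerSeries.coeff (R := LaurentSeries ℚ) β F =
      Zl ^ (ν * β) *
        (∏ k : Fin r, ∏ i ∈ Finset.range (d k * β),
          ((d k : LaurentSeries ℚ) * Zl + ((i + 1 : ℕ) : LaurentSeries ℚ))) /
        ∏ j ∈ Finset.range β, (Zl + ((j + 1 : ℕ) : LaurentSeries ℚ)) ^ n)
    (p γ : ℕ) (hp : p = 1 + ν * γ)
    -- tilde𝔉_p(w,q) and 𝔉_p(w,q)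
    (tFp Fp : PowerSeries (LaurentSeries ℚ))
    (htFp : tFp =
      ∑ β ∈ Finset.range (p / ν + 1), ∑ l ∈ Finset.range (p - ν * β + 1),
        PowerSeries.C (R := LaurentSeries ℚ)
            (HahnSeries.single (-((p : ℤ) - (ν : ℤ) * (β : ℤ) - (l : ℤ))) (ct p (l : ℤ) β)) *
          PowerSeries.X ^ β * Dop^[l] tF)
    (hFp : Fp =
      ∑ β ∈ Finset.range (p / ν + 1), ∑ l ∈ Finset.range (p - ν * β + 1),
        PowerSeries.C (R := LaurentSeries ℚ)
            (HahnSeries.single (-((p : ℤ) - (ν : ℤ) * (β : ℤ) - (l : ℤ))) (ct p (l : ℤ) β)) *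
          PowerSeries.X ^ β * Dop^[l] F) :
    -- (i)
    PowerSeries.coeff (R := ℚ) γ (resH (PowerSeries.C (R := LaurentSeries ℚ)
        ((1 + Zl) ^ n / (Zl ^ (n - r - 1) * ∏ k : Fin r, ((d k : LaurentSeries ℚ) * Zl + 1))) *
        ((tF - tFp) * tF⁻¹)))
      = PowerSeries.coeff (R := ℚ) γ (resH (PowerSeries.C (R := LaurentSeries ℚ)
        ((1 + Zl) ^ n / (Zl ^ (n - r - 1) * ∏ k : Fin r, ((d k : LaurentSeries ℚ) * Zl + 1))) *
        ((F - Fp) * F⁻¹)))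
    ∧
    -- (ii)
    PowerSeries.coeff (R := ℚ) γ (resH (PowerSeries.C (R := LaurentSeries ℚ)
        (Zl ^ (r + 1) / ∏ k : Fin r, ((d k : LaurentSeries ℚ) * Zl + 1)) *
        (tFp * tF⁻¹)))
      = 0 := by
  have hn : n ≠ 0 := by omega
  have hN := valuation_Zl_pow_mul_prod_le ν r d
  have hT : WeightedOrderGE ν 0 tF :=
    .of_coeff_eq_div htF hN (valuation_prod_Zl_add_natCast_pow_sub_Zl_pow hn)
  have hF' : WeightedOrderGE ν 0 F := .of_coeff_eq_div hF hN (valuation_prod_Zl_add_natCast_pow n)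
  have hTF : WeightedOrderGE ν n (tF - F) :=
    .sub_of_coeff_eq_div htF hF hN (valuation_prod_Zl_add_natCast_pow_sub_Zl_pow hn)
      (valuation_prod_Zl_add_natCast_pow n) (valuation_prod_sub_prod_Zl_pow_le hn)
  have hT1 : PowerSeries.constantCoeff tF = 1 := by simpa using htF 0
  have hF1 : PowerSeries.constantCoeff F = 1 := by simpa using hF 0
  have htFp' : tFp = dopTransform ν p (fun β l => ct p l β) tF := htFp
  have hFp' : Fp = dopTransform ν p (fun β l => ct p l β) F := hFp
  subst htFp' hFp' hp
  constructor
  · exact coeff_resH_C_mul_eq_of_sub (valuation_one_add_Zl_pow_div_le _ _ d)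
      (weightedOrderGE_sub_dopTransform_mul_inv_sub _ hT1 hF1 hT hF' hTF) (by push_cast; omega)
  · exact coeff_resH_C_mul_eq_zero (valuation_Zl_pow_div_prod d).le
      (weightedOrderGE_dopTransform_mul_inv _ hT1 hT) (by push_cast; omega)

theorem stmt9 (n r : ℕ) (hr : 1 ≤ r) (d : Fin r → ℕ) (hd : ∀ k, 2 ≤ d k)
    (m D : ℕ) (hm : m = ∑ k, d k) (hD : D = ∏ k, d k ^ d k)
    (ν : ℕ) (hν : ν = n - m) (hmn : m < n)
    -- the coefficients c̃_{p,l}^{(β)}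
    (ct : ℕ → ℤ → ℕ → ℚ)
    (hct0 : ∀ (p : ℕ) (l : ℤ), ct p l 0 = if l = (p : ℤ) then 1 else 0)
    (hctz : ∀ (p : ℕ) (l : ℤ) (β : ℕ),
      (l < 0 ∨ (p : ℤ) - (ν : ℤ) * (β : ℤ) < l) → ct p l β = 0)
    (hctrec : ∀ (p : ℕ) (l : ℤ) (β : ℕ), 1 ≤ β → 0 ≤ l → l ≤ (p : ℤ) - (ν : ℤ) * (β : ℤ) →
      ct p l β = -∑ β₁ ∈ Finset.range β, ∑ k ∈ Finset.Icc (0 : ℤ) ((p : ℤ) - (ν : ℤ) * (β₁ : ℤ)),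
        ct p k β₁ * ccoef n r d k.toNat (β - β₁) l)
    -- the series tilde𝔉(w,q) and 𝔉(w,q)
    (tF F : PowerSeries (LaurentSeries ℚ))
    (htF : ∀ β : ℕ, PowerSeries.coeff (R := LaurentSeries ℚ) β tF =
      Zl ^ (ν * β) *
        (∏ k : Fin r, ∏ i ∈ Finset.range (d k * β),
          ((d k : LaurentSeries ℚ) * Zl + ((i + 1 : ℕ) : LaurentSeries ℚ))) /
        ∏ j ∈ Finset.range β, ((Zl + ((j + 1 : ℕ) : LaurentSeries ℚ)) ^ n - Zl ^ n))
    (hF : ∀ β : ℕ, PowerSeries.coeff (R := LaurentSeries ℚ) β F =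
      Zl ^ (ν * β) *
        (∏ k : Fin r, ∏ i ∈ Finset.range (d k * β),
          ((d k : LaurentSeries ℚ) * Zl + ((i + 1 : ℕ) : LaurentSeries ℚ))) /
        ∏ j ∈ Finset.range β, (Zl + ((j + 1 : ℕ) : LaurentSeries ℚ)) ^ n)
    (p γ : ℕ) (hp : p = 1 + ν * γ)
    -- tilde𝔉_p(w,q) and 𝔉_p(w,q)
    (tFp Fp : PowerSeries (LaurentSeries ℚ))
    (htFp : tFp =
      ∑ β ∈ Finset.range (p / ν + 1), ∑ l ∈ Finset.range (p - ν * β + 1),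
        PowerSeries.C (R := LaurentSeries ℚ)
            (HahnSeries.single (-((p : ℤ) - (ν : ℤ) * (β : ℤ) - (l : ℤ))) (ct p (l : ℤ) β)) *
          PowerSeries.X ^ β * Dop^[l] tF)
    (hFp : Fp =
      ∑ β ∈ Finset.range (p / ν + 1), ∑ l ∈ Finset.range (p - ν * β + 1),
        PowerSeries.C (R := LaurentSeries ℚ)
            (HahnSeries.single (-((p : ℤ) - (ν : ℤ) * (β : ℤ) - (l : ℤ))) (ct p (l : ℤ) β)) *
          PowerSeries.X ^ β * Dop^[l] F) :
    -- (i)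
    PowerSeries.coeff (R := ℚ) γ (resH (PowerSeries.C (R := LaurentSeries ℚ)
        ((1 + Zl) ^ n / (Zl ^ (n - r - 1) * ∏ k : Fin r, ((d k : LaurentSeries ℚ) * Zl + 1))) *
        ((tF - tFp) * tF⁻¹)))
      = PowerSeries.coeff (R := ℚ) γ (resH (PowerSeries.C (R := LaurentSeries ℚ)
        ((1 + Zl) ^ n / (Zl ^ (n - r - 1) * ∏ k : Fin r, ((d k : LaurentSeries ℚ) * Zl + 1))) *
        ((F - Fp) * F⁻¹)))
    ∧
    -- (ii)
    PowerSeries.coeff (R := ℚ) γ (resH (PowerSeries.C (R := LaurentSeries ℚ)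
        (Zl ^ (r + 1) / ∏ k : Fin r, ((d k : LaurentSeries ℚ) * Zl + 1)) *
        (tFp * tF⁻¹)))
      = 0 :=
  stmt9_general n r d m ν hmn ct tF F htF hF p γ hp tFp Fp htFp hFp
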